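/- arXiv:2003.08719 — 4 statements merged into one kernel-verified Lean document; each statement's English description precedes it below -/
import Mathlib

section
/- Let Q be a symmetric n×n real matrix, s, α ∈ ℝⁿ, g = Qα − s, and let d, p_prev ∈ ℝⁿ satisfy the first orthogonality condition gᵀp_prev = 0. Let γ ∈ ℝ, p = d + γ p_prev, and suppose pᵀQp > 0. Then for ρ* = −(gᵀd)/(pᵀQp), the decrease of the dual objective is Θ(α) − Θ(α + ρ*p) = (1/2)(gᵀd)²/(pᵀQp). If moreover p_prevᵀQp_prev > 0, dᵀQd > 0 and γ = −(dᵀQp_prev)/(p_prevᵀQp_prev), this decrease equals (1/2)(gᵀd)² / ( ‖d‖²_Q (1 − (dᵀQp_prev)²/(‖d‖²_Q ‖p_prev‖²_Q)) ). -/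
/-!
Along the ray `α + ρ p` the quadratic `Θ` decreases by `-ρ gᵀp - ρ²/2 ‖p‖²_Q`, and the first
orthogonality condition turns `gᵀp` into `gᵀd`; maximizing in `ρ` gives `(gᵀd)² / (2 ‖p‖²_Q)`.
With the conjugate choice of `γ` the `γ²` term cancels half of the cross term, so
`‖p‖²_Q = ‖d‖²_Q - (dᵀQp_prev)² / ‖p_prev‖²_Q`.
-/

open Matrix

variable {ι R : Type*} [Fintype ι]

theorem Matrix.IsSymm.dotProduct_mulVec_comm [CommSemiring R] {Q : Matrix ι ι R} (hQ : Q.IsSymm)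
    (x y : ι → R) : x ⬝ᵥ Q *ᵥ y = y ⬝ᵥ Q *ᵥ x := by
  rw [dotProduct_mulVec, ← mulVec_transpose, hQ.eq, dotProduct_comm]

theorem Matrix.IsSymm.dotProduct_mulVec_add_smul [CommRing R] {Q : Matrix ι ι R} (hQ : Q.IsSymm)
    (x y : ι → R) (t : R) :
    (x + t • y) ⬝ᵥ Q *ᵥ (x + t • y) =
      x ⬝ᵥ Q *ᵥ x + 2 * t * (x ⬝ᵥ Q *ᵥ y) + t ^ 2 * (y ⬝ᵥ Q *ᵥ y) := by
  simp only [mulVec_add, mulVec_smul, dotProduct_add, add_dotProduct, dotProduct_smul,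
    smul_dotProduct, smul_eq_mul, hQ.dotProduct_mulVec_comm y x]
  ring

def quadObjective [Field R] (Q : Matrix ι ι R) (s β : ι → R) : R :=
  1 / 2 * (β ⬝ᵥ Q *ᵥ β) - s ⬝ᵥ β

theorem quadObjective_sub_add_smul [Field R] [CharZero R] {Q : Matrix ι ι R} (hQ : Q.IsSymm)
    (s α p : ι → R) (ρ : R) :
    quadObjective Q s α - quadObjective Q s (α + ρ • p) =
      -(ρ * ((Q *ᵥ α - s) ⬝ᵥ p)) - ρ ^ 2 / 2 * (p ⬝ᵥ Q *ᵥ p) := by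
  simp only [quadObjective, hQ.dotProduct_mulVec_add_smul, dotProduct_add, dotProduct_smul,
    smul_eq_mul, sub_dotProduct, dotProduct_comm (Q *ᵥ α) p, hQ.dotProduct_mulVec_comm α p]
  ring

/-- `ρ = -a / c` is the exact line-search step for slope `a` and curvature `c`. -/
theorem neg_mul_sub_sq_div_two_mul_of_eq_neg_div [Field R] [CharZero R] {ρ a c : R}
    (hρ : ρ = -a / c) : -(ρ * a) - ρ ^ 2 / 2 * c = 1 / 2 * a ^ 2 / c := by
  rcases eq_or_ne c 0 with rfl | hc
  · simp [hρ]
  · rw [hρ]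
    field_simp
    ring

theorem Matrix.IsSymm.dotProduct_mulVec_conjugate [Field R] {Q : Matrix ι ι R} (hQ : Q.IsSymm)
    {d pprev : ι → R} (hd : d ⬝ᵥ Q *ᵥ d ≠ 0) {γ : R}
    (hγ : γ = -(d ⬝ᵥ Q *ᵥ pprev) / (pprev ⬝ᵥ Q *ᵥ pprev)) :
    (d + γ • pprev) ⬝ᵥ Q *ᵥ (d + γ • pprev) = (d ⬝ᵥ Q *ᵥ d) *
      (1 - (d ⬝ᵥ Q *ᵥ pprev) ^ 2 / ((d ⬝ᵥ Q *ᵥ d) * (pprev ⬝ᵥ Q *ᵥ pprev))) := by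
  rw [hQ.dotProduct_mulVec_add_smul, hγ]
  rcases eq_or_ne (pprev ⬝ᵥ Q *ᵥ pprev) 0 with hpprev | hpprev
  · simp [hpprev]
  · field_simp
    ring

theorem csmo_unclipped_gain_general
    {n : ℕ} (Q : Matrix (Fin n) (Fin n) ℝ) (hQ : Q.IsSymm)
    (s α : Fin n → ℝ)
    (Θ : (Fin n → ℝ) → ℝ)
    (hΘ : ∀ β, Θ β = (1 / 2) * (β ⬝ᵥ Q.mulVec β) - s ⬝ᵥ β)
    (g : Fin n → ℝ) (hg : g = Q.mulVec α - s)
    (d pprev : Fin n → ℝ) (horth : g ⬝ᵥ pprev = 0)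
    (γ : ℝ) (p : Fin n → ℝ) (hp : p = d + γ • pprev)
    (ρstar : ℝ) (hρ : ρstar = -(g ⬝ᵥ d) / (p ⬝ᵥ Q.mulVec p)) :
    Θ α - Θ (α + ρstar • p) = (1 / 2) * (g ⬝ᵥ d) ^ 2 / (p ⬝ᵥ Q.mulVec p) ∧
    (0 < pprev ⬝ᵥ Q.mulVec pprev → 0 < d ⬝ᵥ Q.mulVec d →
      γ = -(d ⬝ᵥ Q.mulVec pprev) / (pprev ⬝ᵥ Q.mulVec pprev) →
      Θ α - Θ (α + ρstar • p) =
        (1 / 2) * (g ⬝ᵥ d) ^ 2 /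
          ((d ⬝ᵥ Q.mulVec d) *
            (1 - (d ⬝ᵥ Q.mulVec pprev) ^ 2 /
              ((d ⬝ᵥ Q.mulVec d) * (pprev ⬝ᵥ Q.mulVec pprev))))) := by
  have hΘQ : Θ = quadObjective Q s := funext hΘ
  have hgp : g ⬝ᵥ p = g ⬝ᵥ d := by
    simp [hp, dotProduct_add, dotProduct_smul, horth]
  have hgain : Θ α - Θ (α + ρstar • p) = 1 / 2 * (g ⬝ᵥ d) ^ 2 / (p ⬝ᵥ Q *ᵥ p) := by
    rw [hΘQ, quadObjective_sub_add_smul hQ, ← hg, hgp]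
    exact neg_mul_sub_sq_div_two_mul_of_eq_neg_div hρ
  refine ⟨hgain, fun _ hd hγ => ?_⟩
  rw [hgain, hp, hQ.dotProduct_mulVec_conjugate hd.ne' hγ]

/-- With g = Qα − s, first orthogonality gᵀp_prev = 0, p = d + γ p_prev and
pᵀQp > 0, the step ρ* = −(gᵀd)/(pᵀQp) yields Θ(α) − Θ(α + ρ*p) = (1/2)(gᵀd)²/(pᵀQp);
with the conjugate choice of γ this equals
(1/2)(gᵀd)² / (‖d‖²_Q (1 − (dᵀQp_prev)²/(‖d‖²_Q ‖p_prev‖²_Q))). -/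
theorem csmo_unclipped_gain
    {n : ℕ} (Q : Matrix (Fin n) (Fin n) ℝ) (hQ : Q.IsSymm)
    (s α : Fin n → ℝ)
    (Θ : (Fin n → ℝ) → ℝ)
    (hΘ : ∀ β, Θ β = (1 / 2) * (β ⬝ᵥ Q.mulVec β) - s ⬝ᵥ β)
    (g : Fin n → ℝ) (hg : g = Q.mulVec α - s)
    (d pprev : Fin n → ℝ) (horth : g ⬝ᵥ pprev = 0)
    (γ : ℝ) (p : Fin n → ℝ) (hp : p = d + γ • pprev)
    (hpQp : 0 < p ⬝ᵥ Q.mulVec p)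
    (ρstar : ℝ) (hρ : ρstar = -(g ⬝ᵥ d) / (p ⬝ᵥ Q.mulVec p)) :
    Θ α - Θ (α + ρstar • p) = (1 / 2) * (g ⬝ᵥ d) ^ 2 / (p ⬝ᵥ Q.mulVec p) ∧
    (0 < pprev ⬝ᵥ Q.mulVec pprev → 0 < d ⬝ᵥ Q.mulVec d →
      γ = -(d ⬝ᵥ Q.mulVec pprev) / (pprev ⬝ᵥ Q.mulVec pprev) →
      Θ α - Θ (α + ρstar • p) =
        (1 / 2) * (g ⬝ᵥ d) ^ 2 /
          ((d ⬝ᵥ Q.mulVec d) *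
            (1 - (d ⬝ᵥ Q.mulVec pprev) ^ 2 /
              ((d ⬝ᵥ Q.mulVec d) * (pprev ⬝ᵥ Q.mulVec pprev))))) :=
  csmo_unclipped_gain_general Q hQ s α Θ hΘ g hg d pprev horth γ p hp ρstar hρ
end

section
/- Let Q be a symmetric positive semidefinite n×n real matrix and d, p ∈ ℝⁿ with dᵀQd > 0 and pᵀQp > 0, let γ* = −(dᵀQp)/(pᵀQp) and p' = d + γ*p, and assume p'ᵀQp' > 0. Then for every real number g_d, the unclipped conjugate SMO gain is at least the unclipped SMO gain: (1/2) g_d² / (p'ᵀQp') ≥ (1/2) g_d² / (dᵀQd). -/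
/-!
Write `a = dᵀQd`, `b = dᵀQp`, `c = pᵀQp`. Since `Q` is symmetric,
`‖d + γ p‖²_Q = a + 2γb + γ²c`, and at `γ* = -b/c` this is `a - b²/c`, which is at most `a`
because `c ≥ 0`. A smaller positive denominator gives a larger gain.
-/

namespace Matrix

variable {ι : Type*} [Fintype ι] {Q : Matrix ι ι ℝ}

theorem IsSymm.dotProduct_mulVec_comm_s6 (hQ : Q.IsSymm) (x y : ι → ℝ) :
    y ⬝ᵥ Q *ᵥ x = x ⬝ᵥ Q *ᵥ y := by
  rw [← dotProduct_transpose_mulVec, hQ.eq]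

theorem IsSymm.dotProduct_mulVec_add_smul_s6 (hQ : Q.IsSymm) (d p : ι → ℝ) (γ : ℝ) :
    (d + γ • p) ⬝ᵥ Q *ᵥ (d + γ • p)
      = d ⬝ᵥ Q *ᵥ d + 2 * γ * (d ⬝ᵥ Q *ᵥ p) + γ ^ 2 * (p ⬝ᵥ Q *ᵥ p) := by
  simp only [mulVec_add, mulVec_smul, dotProduct_add, add_dotProduct, smul_dotProduct,
    dotProduct_smul, smul_eq_mul, hQ.dotProduct_mulVec_comm_s6 d p]
  ring

/-- The exact line-search coefficient `γ*` that makes `d + γ* p` `Q`-conjugate to `p`. -/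
noncomputable def conjugateCoeff (Q : Matrix ι ι ℝ) (d p : ι → ℝ) : ℝ :=
  -(d ⬝ᵥ Q *ᵥ p) / (p ⬝ᵥ Q *ᵥ p)

/-- Holds also when `pᵀQp = 0`: then both `γ*` and `(dᵀQp)² / (pᵀQp)` are junk zeros. -/
theorem IsSymm.dotProduct_mulVec_add_conjugateCoeff_smul (hQ : Q.IsSymm) (d p : ι → ℝ) :
    (d + conjugateCoeff Q d p • p) ⬝ᵥ Q *ᵥ (d + conjugateCoeff Q d p • p)
      = d ⬝ᵥ Q *ᵥ d - (d ⬝ᵥ Q *ᵥ p) ^ 2 / (p ⬝ᵥ Q *ᵥ p) := by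
  rw [hQ.dotProduct_mulVec_add_smul_s6, conjugateCoeff]
  rcases eq_or_ne (p ⬝ᵥ Q *ᵥ p) 0 with hc | hc
  · simp [hc]
  · field_simp
    ring

theorem PosSemidef.dotProduct_mulVec_add_conjugateCoeff_smul_le (hQ : Q.PosSemidef)
    (d p : ι → ℝ) :
    (d + conjugateCoeff Q d p • p) ⬝ᵥ Q *ᵥ (d + conjugateCoeff Q d p • p) ≤ d ⬝ᵥ Q *ᵥ d := by
  have hc : 0 ≤ p ⬝ᵥ Q *ᵥ p := by simpa using hQ.dotProduct_mulVec_nonneg p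
  rw [(isHermitian_iff_isSymm.mp hQ.isHermitian).dotProduct_mulVec_add_conjugateCoeff_smul]
  linarith [div_nonneg (sq_nonneg (d ⬝ᵥ Q *ᵥ p)) hc]

end Matrix

theorem csmo_gain_ge_smo_gain_general
    {n : ℕ} (Q : Matrix (Fin n) (Fin n) ℝ) (hQ : Q.PosSemidef)
    (d p : Fin n → ℝ)
    (γstar : ℝ) (hγ : γstar = -(d ⬝ᵥ Q.mulVec p) / (p ⬝ᵥ Q.mulVec p))
    (p' : Fin n → ℝ) (hp' : p' = d + γstar • p)
    (hp'Qp' : 0 < p' ⬝ᵥ Q.mulVec p') :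
    ∀ gd : ℝ,
      (1 / 2) * gd ^ 2 / (p' ⬝ᵥ Q.mulVec p') ≥ (1 / 2) * gd ^ 2 / (d ⬝ᵥ Q.mulVec d) := by
  intro gd
  subst hγ hp'
  exact div_le_div_of_nonneg_left (by positivity) hp'Qp'
    (hQ.dotProduct_mulVec_add_conjugateCoeff_smul_le d p)

/-- For Q symmetric PSD with dᵀQd > 0, pᵀQp > 0, γ* = −(dᵀQp)/(pᵀQp),
p' = d + γ*p and p'ᵀQp' > 0, for every real g_d the unclipped conjugate SMO gain is
at least the unclipped SMO gain: (1/2) g_d²/(p'ᵀQp') ≥ (1/2) g_d²/(dᵀQd). -/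
theorem csmo_gain_ge_smo_gain
    {n : ℕ} (Q : Matrix (Fin n) (Fin n) ℝ) (hQ : Q.PosSemidef)
    (d p : Fin n → ℝ) (hd : 0 < d ⬝ᵥ Q.mulVec d) (hp : 0 < p ⬝ᵥ Q.mulVec p)
    (γstar : ℝ) (hγ : γstar = -(d ⬝ᵥ Q.mulVec p) / (p ⬝ᵥ Q.mulVec p))
    (p' : Fin n → ℝ) (hp' : p' = d + γstar • p)
    (hp'Qp' : 0 < p' ⬝ᵥ Q.mulVec p') :
    ∀ gd : ℝ,
      (1 / 2) * gd ^ 2 / (p' ⬝ᵥ Q.mulVec p') ≥ (1 / 2) * gd ^ 2 / (d ⬝ᵥ Q.mulVec d) :=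
  csmo_gain_ge_smo_gain_general Q hQ d p γstar hγ p' hp' hp'Qp'
end

section
/- Let Q be a symmetric positive semidefinite n×n real matrix, s ∈ ℝⁿ, C > 0, y ∈ ℝⁿ with y_i ∈ {−1, 1}, and let F = {α ∈ ℝⁿ : 0 ≤ α_i ≤ C for all i, and Σᵢ y_i α_i = 0}. A point α ∈ F minimizes Θ over F if and only if for every l ∈ I_L(α) and every u ∈ I_U(α) one has y_u (Qα − s)_u ≤ y_l (Qα − s)_l, i.e., there is no violating pair at α. -/
open Matrix Filter Topology Set

/-!
For `(l, u) ∈ I_L(α) × I_U(α)` the direction `d = y_l e_l - y_u e_u` keeps `∑ yᵢ αᵢ` fixed and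
stays in the box for small steps; the slope of `Θ` along it is `y_l gₗ - y_u gᵤ` (`g = Qα - s`),
so a violating pair gives a feasible descent direction.
Conversely, for feasible `β` put `cᵢ = yᵢ (βᵢ - αᵢ)` and `hᵢ = yᵢ gᵢ`: then `∑ cᵢ = 0`, every
index with `cᵢ > 0` lies in `I_L(α)` and every index with `cᵢ < 0` in `I_U(α)`, so without
violating pairs some level `M` separates the `hᵢ` on the two sides and
`(β - α) ⬝ g = ∑ cᵢ (hᵢ - M) ≥ 0`. Convexity of `Θ` then gives `Θ α ≤ Θ β`.
-/

variable {ι : Type*} [Fintype ι]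

theorem sum_mul_nonneg_of_sum_eq_zero {c h : ι → ℝ} (hc : ∑ i, c i = 0)
    (hch : ∀ i j, 0 < c i → c j < 0 → h j ≤ h i) : 0 ≤ ∑ i, c i * h i := by
  by_cases hpos : ∃ i, 0 < c i
  · obtain ⟨i₁, hi₁⟩ := hpos
    obtain ⟨i₀, hi₀, hmin⟩ :=
      ({i | 0 < c i} : Finset ι).exists_min_image h ⟨i₁, by simpa using hi₁⟩
    rw [Finset.mem_filter] at hi₀
    have hterm : ∀ i, 0 ≤ c i * (h i - h i₀) := fun i => by
      rcases lt_trichotomy (c i) 0 with hi | hi | hi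
      · exact mul_nonneg_of_nonpos_of_nonpos hi.le (sub_nonpos.2 (hch i₀ i hi₀.2 hi))
      · simp [hi]
      · exact mul_nonneg hi.le (sub_nonneg.2 (hmin i (by simpa using hi)))
    calc 0 ≤ ∑ i, c i * (h i - h i₀) := Finset.sum_nonneg fun i _ => hterm i
      _ = ∑ i, c i * h i := by simp [mul_sub, Finset.sum_sub_distrib, ← Finset.sum_mul, hc]
  · push Not at hpos
    have hzero := (Finset.sum_eq_zero_iff_of_nonpos fun i _ => hpos i).1 hc
    simp [hzero]

theorem eventually_mul_add_mul_sq_neg {a : ℝ} (ha : a < 0) (b : ℝ) :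
    ∀ᶠ t in 𝓝[>] (0 : ℝ), a * t + b * t ^ 2 < 0 := by
  have hlim : Tendsto (fun t => a + b * t) (𝓝[>] 0) (𝓝 a) :=
    ((continuous_const.add (continuous_const_mul b)).tendsto' 0 a (by simp)).mono_left
      nhdsWithin_le_nhds
  filter_upwards [hlim.eventually (gt_mem_nhds ha), self_mem_nhdsWithin] with t hneg (ht : 0 < t)
  calc a * t + b * t ^ 2 = t * (a + b * t) := by ring
    _ < 0 := mul_neg_of_pos_of_neg ht hneg

noncomputable def dualObjective (Q : Matrix ι ι ℝ) (s β : ι → ℝ) : ℝ :=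
  (1 / 2) * (β ⬝ᵥ Q *ᵥ β) - s ⬝ᵥ β

theorem dualObjective_add {Q : Matrix ι ι ℝ} (hQ : Q.IsSymm) (s α d : ι → ℝ) :
    dualObjective Q s (α + d) =
      dualObjective Q s α + d ⬝ᵥ (Q *ᵥ α - s) + (1 / 2) * (d ⬝ᵥ Q *ᵥ d) := by
  have hsym : α ⬝ᵥ Q *ᵥ d = d ⬝ᵥ Q *ᵥ α := by
    rw [dotProduct_mulVec, ← mulVec_transpose, hQ.eq, dotProduct_comm]
  simp only [dualObjective, mulVec_add, add_dotProduct, dotProduct_add, dotProduct_sub, hsym,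
    dotProduct_comm s d]
  ring

theorem dualObjective_add_smul {Q : Matrix ι ι ℝ} (hQ : Q.IsSymm) (s α d : ι → ℝ) (t : ℝ) :
    dualObjective Q s (α + t • d) =
      dualObjective Q s α + (d ⬝ᵥ (Q *ᵥ α - s)) * t + ((1 / 2) * (d ⬝ᵥ Q *ᵥ d)) * t ^ 2 := by
  rw [dualObjective_add hQ, smul_dotProduct, mulVec_smul, dotProduct_smul, smul_dotProduct]
  simp only [smul_eq_mul]
  ring

def feasibleSet (C : ℝ) (y : ι → ℝ) : Set (ι → ℝ) :=
  {β | (∀ i, 0 ≤ β i ∧ β i ≤ C) ∧ ∑ i, y i * β i = 0}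

/-- `I_L(α) = {l | CanMoveWithin C (α l) (y l)}` and
`I_U(α) = {u | CanMoveWithin C (α u) (-y u)}`. -/
def CanMoveWithin (C x v : ℝ) : Prop :=
  (x < C ∧ v = 1) ∨ (0 < x ∧ v = -1)

theorem canMoveWithin_neg_iff {C x v : ℝ} :
    CanMoveWithin C x (-v) ↔ (x < C ∧ v = -1) ∨ (0 < x ∧ v = 1) := by
  simp [CanMoveWithin, neg_eq_iff_eq_neg]

theorem CanMoveWithin.sq_eq_one {C x v : ℝ} (h : CanMoveWithin C x v) : v ^ 2 = 1 := by
  rcases h with ⟨-, rfl⟩ | ⟨-, rfl⟩ <;> norm_num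

theorem CanMoveWithin.eventually_add_mul_mem_Icc {C x v : ℝ} (h : CanMoveWithin C x v)
    (hx : x ∈ Icc 0 C) : ∀ᶠ t in 𝓝[>] (0 : ℝ), x + t * v ∈ Icc 0 C := by
  rcases h with ⟨hxC, rfl⟩ | ⟨hx₀, rfl⟩
  · filter_upwards [Ioo_mem_nhdsGT (sub_pos.2 hxC)] with t ⟨ht₀, htC⟩
    constructor <;> linarith [hx.1]
  · filter_upwards [Ioo_mem_nhdsGT hx₀] with t ⟨ht₀, htx⟩
    constructor <;> linarith [hx.2]

theorem canMoveWithin_of_mul_sub_pos {C x z v : ℝ} (hz : z ∈ Icc 0 C)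
    (hv : v = 1 ∨ v = -1) (h : 0 < v * (z - x)) : CanMoveWithin C x v := by
  rcases hv with rfl | rfl
  · exact Or.inl ⟨by linarith [hz.2], rfl⟩
  · exact Or.inr ⟨by linarith [hz.1], rfl⟩

theorem eventually_add_smul_mem_feasibleSet {C : ℝ} {y α d : ι → ℝ}
    (hα : α ∈ feasibleSet C y) (hd : ∀ i, d i = 0 ∨ CanMoveWithin C (α i) (d i))
    (hdy : ∑ i, y i * d i = 0) : ∀ᶠ t in 𝓝[>] (0 : ℝ), α + t • d ∈ feasibleSet C y := by
  have hbox : ∀ i, ∀ᶠ t in 𝓝[>] (0 : ℝ), α i + t * d i ∈ Icc 0 C := fun i => by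
    rcases hd i with hdi | hdi
    · exact Eventually.of_forall fun t => by simpa [hdi] using hα.1 i
    · exact hdi.eventually_add_mul_mem_Icc (hα.1 i)
  filter_upwards [eventually_all.2 hbox] with t ht
  refine ⟨ht, ?_⟩
  simp only [Pi.add_apply, Pi.smul_apply, smul_eq_mul, mul_add, Finset.sum_add_distrib, hα.2]
  simp [mul_left_comm _ t, ← Finset.mul_sum, hdy]

variable {Q : Matrix ι ι ℝ} {s : ι → ℝ} {C : ℝ} {y α : ι → ℝ}

theorem no_violating_pair_of_isMinOn [DecidableEq ι] (hQ : Q.IsSymm) (hα : α ∈ feasibleSet C y)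
    (hmin : IsMinOn (dualObjective Q s) (feasibleSet C y) α) {l u : ι}
    (hl : CanMoveWithin C (α l) (y l)) (hu : CanMoveWithin C (α u) (-y u)) :
    y u * (Q *ᵥ α - s) u ≤ y l * (Q *ᵥ α - s) l := by
  by_contra! hviol
  have hlu : l ≠ u := by rintro rfl; exact lt_irrefl _ hviol
  set d : ι → ℝ := Pi.single l (y l) + Pi.single u (-y u)
  have hd : ∀ i, d i = 0 ∨ CanMoveWithin C (α i) (d i) := fun i => by
    by_cases hil : i = l
    · subst hil; right; simpa [d, hlu] using hl
    by_cases hiu : i = u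
    · subst hiu; right; simpa [d, hil] using hu
    · simp [d, hil, hiu]
  have hdy : ∑ i, y i * d i = 0 := by
    change y ⬝ᵥ d = 0
    simp only [d, dotProduct_add, dotProduct_single]
    linear_combination hl.sq_eq_one - hu.sq_eq_one
  have hdg : d ⬝ᵥ (Q *ᵥ α - s) < 0 := by
    simp only [d, add_dotProduct, single_dotProduct]
    linarith
  obtain ⟨t, hfeas, hdesc⟩ := ((eventually_add_smul_mem_feasibleSet hα hd hdy).and
    (eventually_mul_add_mul_sq_neg hdg ((1 / 2) * (d ⬝ᵥ Q *ᵥ d)))).exists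
  have := isMinOn_iff.1 hmin _ hfeas
  rw [dualObjective_add_smul hQ] at this
  linarith

theorem isMinOn_of_no_violating_pair (hQ : Q.PosSemidef) (hy : ∀ i, y i = 1 ∨ y i = -1)
    (hα : α ∈ feasibleSet C y)
    (h : ∀ l u, CanMoveWithin C (α l) (y l) → CanMoveWithin C (α u) (-y u) →
      y u * (Q *ᵥ α - s) u ≤ y l * (Q *ᵥ α - s) l) :
    IsMinOn (dualObjective Q s) (feasibleSet C y) α := by
  refine isMinOn_iff.2 fun β hβ => ?_
  set g := Q *ᵥ α - s
  have hlin : 0 ≤ (β - α) ⬝ᵥ g := by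
    have hrw : (β - α) ⬝ᵥ g = ∑ i, (y i * (β i - α i)) * (y i * g i) :=
      Finset.sum_congr rfl fun i _ => by
        have hyi : y i ^ 2 = 1 := by rcases hy i with h | h <;> norm_num [h]
        rw [Pi.sub_apply]
        linear_combination (-(β i - α i) * g i) * hyi
    rw [hrw]
    refine sum_mul_nonneg_of_sum_eq_zero ?_ fun i j hi hj => h i j ?_ ?_
    · simp [mul_sub, Finset.sum_sub_distrib, hα.2, hβ.2]
    · exact canMoveWithin_of_mul_sub_pos (hβ.1 i) (hy i) hi
    · exact canMoveWithin_of_mul_sub_pos (hβ.1 j)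
        (by rcases hy j with hyj | hyj <;> simp [hyj]) (by linarith)
  have hquad : 0 ≤ (β - α) ⬝ᵥ Q *ᵥ (β - α) := by
    simpa using hQ.dotProduct_mulVec_nonneg (β - α)
  have hexp := dualObjective_add (isHermitian_iff_isSymm.1 hQ.isHermitian) s α (β - α)
  rw [add_sub_cancel] at hexp
  linarith

theorem smo_optimality_no_violating_pair_general
    {n : ℕ} (Q : Matrix (Fin n) (Fin n) ℝ) (hQ : Q.PosSemidef)
    (s : Fin n → ℝ) (C : ℝ)
    (y : Fin n → ℝ) (hy : ∀ i, y i = 1 ∨ y i = -1)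
    (Θ : (Fin n → ℝ) → ℝ)
    (hΘ : ∀ β, Θ β = (1 / 2) * (β ⬝ᵥ Q.mulVec β) - s ⬝ᵥ β)
    (F : Set (Fin n → ℝ))
    (hF : F = {β | (∀ i, 0 ≤ β i ∧ β i ≤ C) ∧ ∑ i, y i * β i = 0})
    (α : Fin n → ℝ) (hα : α ∈ F) :
    (∀ β ∈ F, Θ α ≤ Θ β) ↔
      (∀ l u : Fin n,
        ((α l < C ∧ y l = 1) ∨ (0 < α l ∧ y l = -1)) →
        ((α u < C ∧ y u = -1) ∨ (0 < α u ∧ y u = 1)) →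
        y u * (Q.mulVec α - s) u ≤ y l * (Q.mulVec α - s) l) := by
  obtain rfl : F = feasibleSet C y := hF
  obtain rfl : Θ = dualObjective Q s := funext hΘ
  rw [← isMinOn_iff]
  refine ⟨fun hmin l u hl hu => ?_, fun h => ?_⟩
  · exact no_violating_pair_of_isMinOn (isHermitian_iff_isSymm.1 hQ.isHermitian) hα hmin hl
      (canMoveWithin_neg_iff.2 hu)
  · exact isMinOn_of_no_violating_pair hQ hy hα fun l u hl hu => h l u hl
      (canMoveWithin_neg_iff.1 hu)

/-- For Q symmetric PSD, α in the feasible set F (box and equality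
constraints) minimizes Θ over F iff there is no violating pair at α, i.e., for every
l ∈ I_L(α) and u ∈ I_U(α), y_u (Qα − s)_u ≤ y_l (Qα − s)_l. -/
theorem smo_optimality_no_violating_pair
    {n : ℕ} (Q : Matrix (Fin n) (Fin n) ℝ) (hQ : Q.PosSemidef)
    (s : Fin n → ℝ) (C : ℝ) (hC : 0 < C)
    (y : Fin n → ℝ) (hy : ∀ i, y i = 1 ∨ y i = -1)
    (Θ : (Fin n → ℝ) → ℝ)
    (hΘ : ∀ β, Θ β = (1 / 2) * (β ⬝ᵥ Q.mulVec β) - s ⬝ᵥ β)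
    (F : Set (Fin n → ℝ))
    (hF : F = {β | (∀ i, 0 ≤ β i ∧ β i ≤ C) ∧ ∑ i, y i * β i = 0})
    (α : Fin n → ℝ) (hα : α ∈ F) :
    (∀ β ∈ F, Θ α ≤ Θ β) ↔
      (∀ l u : Fin n,
        ((α l < C ∧ y l = 1) ∨ (0 < α l ∧ y l = -1)) →
        ((α u < C ∧ y u = -1) ∨ (0 < α u ∧ y u = 1)) →
        y u * (Q.mulVec α - s) u ≤ y l * (Q.mulVec α - s) l) :=
  smo_optimality_no_violating_pair_general Q hQ s C y hy Θ hΘ F hF α hα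
end

section
/- Let Q be a symmetric n×n real matrix, s ∈ ℝⁿ, C > 0, y ∈ ℝⁿ with y_i ∈ {−1, 1}, let α satisfy 0 ≤ α_i ≤ C for all i and Σᵢ y_i α_i = 0, and suppose l ∈ I_L(α), u ∈ I_U(α), l ≠ u, and y_u (Qα − s)_u − y_l (Qα − s)_l > 0. Set d = y_l e_l − y_u e_u. Then there exists ρ̄ > 0 such that for every ρ with 0 < ρ ≤ ρ̄, the point α + ρd satisfies 0 ≤ α_i + ρd_i ≤ C for all i, Σᵢ y_i (α_i + ρ d_i) = 0, and Θ(α + ρd) < Θ(α). -/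
open Matrix

open Filter Topology Set

/-!
Moving along `d = y_l e_l - y_u e_u` changes only the coordinates `l` and `u`, each in the
direction in which `l ∈ I_L(α)` and `u ∈ I_U(α)` leave room inside `[0, C]`, and keeps
`∑ yᵢ αᵢ` fixed because `y_l² = y_u² = 1`. For symmetric `Q`,
`Θ(α + ρd) = Θ(α) - ρ v + ρ²/2 · dᵀQd` where `v > 0` is the violation, so `Θ` decreases for
small `ρ > 0`. Each requirement holds eventually along `𝓝[>] 0`, which yields a common `ρ̄`.
-/

theorem exists_forall_Ioc_of_eventually_nhdsGT {a : ℝ} {p : ℝ → Prop} (h : ∀ᶠ x in 𝓝[>] a, p x) :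
    ∃ b, a < b ∧ ∀ x, a < x → x ≤ b → p x := by
  obtain ⟨b, hab, hsub⟩ := mem_nhdsGT_iff_exists_Ioc_subset.mp h
  exact ⟨b, hab, fun x hax hxb => hsub ⟨hax, hxb⟩⟩

theorem eventually_nonneg_add_mul {a d : ℝ} (ha : 0 ≤ a) (had : 0 < a ∨ 0 ≤ d) :
    ∀ᶠ ρ in 𝓝[>] 0, 0 ≤ a + ρ * d := by
  rcases had with hpos | hd
  · have hlim : Tendsto (fun ρ : ℝ => a + ρ * d) (𝓝 0) (𝓝 a) := by
      simpa using ((tendsto_id (x := 𝓝 (0 : ℝ))).mul_const d).const_add a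
    exact nhdsWithin_le_nhds (hlim.eventually (eventually_ge_nhds hpos))
  · filter_upwards [self_mem_nhdsWithin] with ρ (hρ : 0 < ρ)
    positivity

theorem eventually_mem_Icc_add_mul {a d C : ℝ} (ha : a ∈ Icc 0 C)
    (hlo : 0 < a ∨ 0 ≤ d) (hhi : a < C ∨ d ≤ 0) :
    ∀ᶠ ρ in 𝓝[>] 0, a + ρ * d ∈ Icc 0 C := by
  have hhi' : 0 < C - a ∨ 0 ≤ -d := by
    rcases hhi with h | h
    · exact .inl (sub_pos.mpr h)
    · exact .inr (neg_nonneg.mpr h)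
  filter_upwards [eventually_nonneg_add_mul ha.1 hlo,
    eventually_nonneg_add_mul (sub_nonneg.mpr ha.2) hhi'] with ρ hlo hhi
  constructor <;> linarith

theorem eventually_mul_add_sq_mul_neg {a : ℝ} (ha : a < 0) (K : ℝ) :
    ∀ᶠ ρ in 𝓝[>] 0, ρ * a + ρ ^ 2 / 2 * K < 0 := by
  have hlim : Tendsto (fun ρ : ℝ => a + ρ / 2 * K) (𝓝 0) (𝓝 a) := by
    simpa using (((tendsto_id (x := 𝓝 (0 : ℝ))).div_const 2).mul_const K).const_add a
  filter_upwards [self_mem_nhdsWithin, nhdsWithin_le_nhds (hlim.eventually (eventually_lt_nhds ha))]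
    with ρ (hρ : 0 < ρ) hneg
  have : ρ * (a + ρ / 2 * K) < 0 := mul_neg_of_pos_of_neg hρ hneg
  linarith

theorem quadratic_add_smul {ι : Type*} [Fintype ι] {Q : Matrix ι ι ℝ} (hQ : Q.IsSymm)
    (s α d : ι → ℝ) (ρ : ℝ) :
    1 / 2 * ((α + ρ • d) ⬝ᵥ Q *ᵥ (α + ρ • d)) - s ⬝ᵥ (α + ρ • d) =
      1 / 2 * (α ⬝ᵥ Q *ᵥ α) - s ⬝ᵥ α + ρ * (d ⬝ᵥ (Q *ᵥ α - s)) + ρ ^ 2 / 2 * (d ⬝ᵥ Q *ᵥ d) := by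
  have hsymm : α ⬝ᵥ Q *ᵥ d = d ⬝ᵥ Q *ᵥ α := by
    rw [dotProduct_mulVec, ← mulVec_transpose, hQ.eq, dotProduct_comm]
  simp only [mulVec_add, mulVec_smul, dotProduct_add, add_dotProduct, smul_dotProduct,
    dotProduct_smul, dotProduct_sub, smul_eq_mul, hsymm, dotProduct_comm s d]
  ring

section PairDirection

variable {ι : Type*} [DecidableEq ι] (y : ι → ℝ) (l u : ι)

def pairDirection : ι → ℝ := y l • Pi.single l 1 - y u • Pi.single u 1

variable {y l u}

theorem pairDirection_apply_left (hlu : l ≠ u) : pairDirection y l u l = y l := by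
  simp [pairDirection, hlu]

theorem pairDirection_apply_right (hlu : l ≠ u) : pairDirection y l u u = -y u := by
  simp [pairDirection, hlu.symm]

theorem pairDirection_apply_of_ne {i : ι} (hil : i ≠ l) (hiu : i ≠ u) :
    pairDirection y l u i = 0 := by
  simp [pairDirection, hil, hiu]

theorem pairDirection_dotProduct [Fintype ι] (w : ι → ℝ) :
    pairDirection y l u ⬝ᵥ w = y l * w l - y u * w u := by
  simp [pairDirection, sub_dotProduct, smul_dotProduct]

theorem eventually_forall_mem_Icc_add_mul_pairDirection [Finite ι] {α : ι → ℝ} {C : ℝ}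
    (hbox : ∀ i, 0 ≤ α i ∧ α i ≤ C) (hlu : l ≠ u)
    (hl : (α l < C ∧ y l = 1) ∨ (0 < α l ∧ y l = -1))
    (hu : (α u < C ∧ y u = -1) ∨ (0 < α u ∧ y u = 1)) :
    ∀ᶠ ρ in 𝓝[>] 0, ∀ i, α i + ρ * pairDirection y l u i ∈ Icc 0 C := by
  refine eventually_all.mpr fun i => ?_
  obtain rfl | hil := eq_or_ne i l
  · rw [pairDirection_apply_left hlu]
    rcases hl with ⟨hlt, hy⟩ | ⟨hpos, hy⟩
    · exact eventually_mem_Icc_add_mul (hbox i) (.inr (by simp [hy])) (.inl hlt)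
    · exact eventually_mem_Icc_add_mul (hbox i) (.inl hpos) (.inr (by simp [hy]))
  obtain rfl | hiu := eq_or_ne i u
  · rw [pairDirection_apply_right hlu]
    rcases hu with ⟨hlt, hy⟩ | ⟨hpos, hy⟩
    · exact eventually_mem_Icc_add_mul (hbox i) (.inr (by simp [hy])) (.inl hlt)
    · exact eventually_mem_Icc_add_mul (hbox i) (.inl hpos) (.inr (by simp [hy]))
  · rw [pairDirection_apply_of_ne hil hiu]
    exact eventually_mem_Icc_add_mul (hbox i) (.inr le_rfl) (.inr le_rfl)

end PairDirection

theorem violating_pair_gives_feasible_descent_general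
    {n : ℕ} (Q : Matrix (Fin n) (Fin n) ℝ) (hQ : Q.IsSymm)
    (s : Fin n → ℝ) (C : ℝ)
    (y : Fin n → ℝ)
    (Θ : (Fin n → ℝ) → ℝ)
    (hΘ : ∀ β, Θ β = (1 / 2) * (β ⬝ᵥ Q.mulVec β) - s ⬝ᵥ β)
    (α : Fin n → ℝ)
    (hbox : ∀ i, 0 ≤ α i ∧ α i ≤ C) (heq : ∑ i, y i * α i = 0)
    (l u : Fin n) (hlu : l ≠ u)
    (hl : (α l < C ∧ y l = 1) ∨ (0 < α l ∧ y l = -1))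
    (hu : (α u < C ∧ y u = -1) ∨ (0 < α u ∧ y u = 1))
    (hviol : 0 < y u * (Q.mulVec α - s) u - y l * (Q.mulVec α - s) l)
    (d : Fin n → ℝ)
    (hd : d = fun i => y l * (Pi.single l 1 : Fin n → ℝ) i
                      - y u * (Pi.single u 1 : Fin n → ℝ) i) :
    ∃ ρbar : ℝ, 0 < ρbar ∧ ∀ ρ : ℝ, 0 < ρ → ρ ≤ ρbar →
      (∀ i, 0 ≤ α i + ρ * d i ∧ α i + ρ * d i ≤ C) ∧
      (∑ i, y i * (α i + ρ * d i) = 0) ∧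
      Θ (α + ρ • d) < Θ α := by
  obtain rfl : d = pairDirection y l u := by
    rw [hd]; ext i; simp [pairDirection]
  have hyl : y l * y l = 1 := by rcases hl with ⟨-, h⟩ | ⟨-, h⟩ <;> norm_num [h]
  have hyu : y u * y u = 1 := by rcases hu with ⟨-, h⟩ | ⟨-, h⟩ <;> norm_num [h]
  have hbalance : y ⬝ᵥ pairDirection y l u = 0 := by
    rw [dotProduct_comm, pairDirection_dotProduct, hyl, hyu, sub_self]
  have hslope : pairDirection y l u ⬝ᵥ (Q *ᵥ α - s) < 0 := by
    rw [pairDirection_dotProduct]; linarith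
  obtain ⟨ρbar, hρbar, hsmall⟩ := exists_forall_Ioc_of_eventually_nhdsGT
    ((eventually_forall_mem_Icc_add_mul_pairDirection hbox hlu hl hu).and
      (eventually_mul_add_sq_mul_neg hslope (pairDirection y l u ⬝ᵥ Q *ᵥ pairDirection y l u)))
  refine ⟨ρbar, hρbar, fun ρ hρ hρle => ?_⟩
  obtain ⟨hfeasible, hdescent⟩ := hsmall ρ hρ hρle
  refine ⟨hfeasible, ?_, ?_⟩
  · change y ⬝ᵥ (α + ρ • pairDirection y l u) = 0
    rw [dotProduct_add, dotProduct_smul, hbalance, smul_zero, add_zero]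
    exact heq
  · rw [hΘ, hΘ, quadratic_add_smul hQ]
    linarith

/-- At a feasible α, if (l, u) is a violating pair (l ∈ I_L(α), u ∈ I_U(α),
l ≠ u, y_u (Qα − s)_u − y_l (Qα − s)_l > 0) and d = y_l e_l − y_u e_u, then there is
ρ̄ > 0 such that every step 0 < ρ ≤ ρ̄ keeps α + ρd feasible and strictly decreases Θ. -/
theorem violating_pair_gives_feasible_descent
    {n : ℕ} (Q : Matrix (Fin n) (Fin n) ℝ) (hQ : Q.IsSymm)
    (s : Fin n → ℝ) (C : ℝ) (hC : 0 < C)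
    (y : Fin n → ℝ) (hy : ∀ i, y i = 1 ∨ y i = -1)
    (Θ : (Fin n → ℝ) → ℝ)
    (hΘ : ∀ β, Θ β = (1 / 2) * (β ⬝ᵥ Q.mulVec β) - s ⬝ᵥ β)
    (α : Fin n → ℝ)
    (hbox : ∀ i, 0 ≤ α i ∧ α i ≤ C) (heq : ∑ i, y i * α i = 0)
    (l u : Fin n) (hlu : l ≠ u)
    (hl : (α l < C ∧ y l = 1) ∨ (0 < α l ∧ y l = -1))
    (hu : (α u < C ∧ y u = -1) ∨ (0 < α u ∧ y u = 1))
    (hviol : 0 < y u * (Q.mulVec α - s) u - y l * (Q.mulVec α - s) l)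
    (d : Fin n → ℝ)
    (hd : d = fun i => y l * (Pi.single l 1 : Fin n → ℝ) i
                      - y u * (Pi.single u 1 : Fin n → ℝ) i) :
    ∃ ρbar : ℝ, 0 < ρbar ∧ ∀ ρ : ℝ, 0 < ρ → ρ ≤ ρbar →
      (∀ i, 0 ≤ α i + ρ * d i ∧ α i + ρ * d i ≤ C) ∧
      (∑ i, y i * (α i + ρ * d i) = 0) ∧
      Θ (α + ρ • d) < Θ α :=
  violating_pair_gives_feasible_descent_general Q hQ s C y Θ hΘ α hbox heq l u hlu hl hu hviol d hd
end
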